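/- arXiv:math/0310150 — 9 statements merged into one kernel-verified Lean document; each statement's English description precedes it below -/
import Mathlib

section
/- Let G be a finite abelian group and a_1, ..., a_r elements of G generating G with a_1 + ... + a_r = 0, where r ≥ 4 and the orders m_1 ≤ m_2 ≤ ... ≤ m_r of the a_i satisfy (m_1,m_2,m_3,m_4) = (2,2,3,3) when r = 4. Then G is cyclic of order 6. -/
/-!
The element `a 0 + a 1` is killed both by `2` and, being `-(a 2 + a 3)`, by `3`; hence it vanishes,
and so does `a 2 + a 3`. Thus `a 1 = a 0` and `a 3 = -a 2`, so `G` is generated by `a 0` and `a 2`,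
whose orders `2` and `3` are coprime. Such a pair generates the same subgroup as its sum, which has
order `6`.
-/

theorem eq_zero_of_nsmul_eq_zero_of_coprime {G : Type*} [AddMonoid G] {m n : ℕ} {x : G} (hmn : m.Coprime n)
    (hm : m • x = 0) (hn : n • x = 0) : x = 0 :=
  AddMonoid.addOrderOf_eq_one_iff.mp <| Nat.eq_one_of_dvd_coprimes hmn
    (addOrderOf_dvd_of_nsmul_eq_zero hm) (addOrderOf_dvd_of_nsmul_eq_zero hn)

/-- `addOrderOf y • (x + y) = addOrderOf y • x`, and multiplying by a unit modulo the order of `x`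
does not change the cyclic subgroup generated by `x`. -/
theorem mem_zmultiples_add_of_coprime {G : Type*} [AddCommGroup G] {x y : G} (h : (addOrderOf x).Coprime (addOrderOf y)) :
    x ∈ AddSubgroup.zmultiples (x + y) := by
  obtain ⟨k, hk⟩ := exists_nsmul_eq_self_of_coprime h.symm
  have hkx : (k * addOrderOf y) • (x + y) = x := by
    rw [mul_nsmul', nsmul_add, addOrderOf_nsmul_eq_zero, add_zero, hk]
  have hmem := nsmul_mem (AddSubgroup.mem_zmultiples (x + y)) (k * addOrderOf y)
  rwa [hkx] at hmem

/-- If a finite abelian group `G` is generated by four elements of orders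
`(2,2,3,3)` whose sum is zero, then `G` is cyclic of order `6`. -/
theorem stmt_0 {G : Type*} [AddCommGroup G] [Fintype G]
    (a : Fin 4 → G)
    (hgen : AddSubgroup.closure (Set.range a) = ⊤)
    (hsum : a 0 + a 1 + a 2 + a 3 = 0)
    (h0 : addOrderOf (a 0) = 2) (h1 : addOrderOf (a 1) = 2)
    (h2 : addOrderOf (a 2) = 3) (h3 : addOrderOf (a 3) = 3) :
    IsAddCyclic G ∧ Fintype.card G = 6 := by
  have two_a0 : 2 • a 0 = 0 := addOrderOf_dvd_iff_nsmul_eq_zero.mp h0.dvd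
  have two_a1 : 2 • a 1 = 0 := addOrderOf_dvd_iff_nsmul_eq_zero.mp h1.dvd
  have three_a2 : 3 • a 2 = 0 := addOrderOf_dvd_iff_nsmul_eq_zero.mp h2.dvd
  have three_a3 : 3 • a 3 = 0 := addOrderOf_dvd_iff_nsmul_eq_zero.mp h3.dvd
  have hs01 : a 0 + a 1 = 0 := by
    refine eq_zero_of_nsmul_eq_zero_of_coprime (m := 2) (n := 3) (by norm_num) ?_ ?_
    · rw [nsmul_add, two_a0, two_a1, add_zero]
    · have h01 : a 0 + a 1 = -(a 2 + a 3) :=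
        eq_neg_of_add_eq_zero_left (by rw [← add_assoc]; exact hsum)
      rw [h01, smul_neg, nsmul_add, three_a2, three_a3, add_zero, neg_zero]
  have ha1 : a 1 = a 0 := by
    rw [eq_neg_of_add_eq_zero_right hs01, neg_eq_of_add_eq_zero_right (two_nsmul (a 0) ▸ two_a0)]
  have ha3 : a 3 = -a 2 := by
    rw [hs01, zero_add] at hsum
    exact eq_neg_of_add_eq_zero_right hsum
  have hcop : (addOrderOf (a 0)).Coprime (addOrderOf (a 2)) := by rw [h0, h2]; norm_num
  have htop : AddSubgroup.zmultiples (a 0 + a 2) = ⊤ := by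
    rw [eq_top_iff, ← hgen, AddSubgroup.closure_le]
    have ha0 := mem_zmultiples_add_of_coprime hcop
    have ha2 := add_comm (a 0) (a 2) ▸ mem_zmultiples_add_of_coprime hcop.symm
    rintro _ ⟨i, rfl⟩
    fin_cases i
    exacts [ha0, ha1 ▸ ha0, ha2, ha3 ▸ neg_mem ha2]
  refine ⟨isAddCyclic_iff_exists_zmultiples_eq_top.mpr ⟨_, htop⟩, ?_⟩
  rw [← Nat.card_eq_fintype_card, ← addOrderOf_eq_card_of_zmultiples_eq_top htop,
    (AddCommute.all _ _).addOrderOf_add_eq_mul_addOrderOf_of_coprime hcop, h0, h2]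
end

section
/- Let G = (Z/2Z)^2 ⊕ (Z/4Z). If a_1,...,a_r generate G and b_1,...,b_s generate G, then there exists a nonzero element g lying in both the union of the cyclic subgroups ⟨a_i⟩ and the union of the cyclic subgroups ⟨b_j⟩. -/
/-!
The doubling map of `G = (ℤ/2)² ⊕ ℤ/4` has image `{0, t}` with `t = ((0, 0), 2)`. Since `G` is
not killed by `2`, no generating family is, so every generating family has a member `c` with
`2 • c = t`; hence `t` lies in a cyclic subgroup from each family.
-/

theorem AddSubgroup.exists_nsmul_ne_zero_of_closure_eq_top {G ι : Type*}
    [AddCommGroup G] {c : ι → G} (hc : AddSubgroup.closure (Set.range c) = ⊤) {n : ℕ} {x : G} (hx : n • x ≠ 0) :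
    ∃ i, n • c i ≠ 0 := by
  by_contra! h
  have hker : AddSubgroup.closure (Set.range c) ≤ (nsmulAddMonoidHom (α := G) n).ker := by
    rw [AddSubgroup.closure_le]
    rintro _ ⟨i, rfl⟩
    exact h i
  rw [hc] at hker
  exact hx (hker (AddSubgroup.mem_top x))

lemma two_nsmul_eq_zero_or_eq (x : (ZMod 2 × ZMod 2) × ZMod 4) :
    2 • x = 0 ∨ 2 • x = ((0, 0), 2) := by
  revert x
  decide

lemma exists_two_nsmul_eq_of_closure_eq_top {ι : Type*} {c : ι → (ZMod 2 × ZMod 2) × ZMod 4}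
    (hc : AddSubgroup.closure (Set.range c) = ⊤) : ∃ i, 2 • c i = ((0, 0), 2) := by
  obtain ⟨i, hi⟩ := AddSubgroup.exists_nsmul_ne_zero_of_closure_eq_top hc
    (n := 2) (x := ((0, 0), 1)) (by decide)
  exact ⟨i, (two_nsmul_eq_zero_or_eq (c i)).resolve_left hi⟩

/-- In `G = (ℤ/2)² ⊕ ℤ/4`, for any two generating families `a₁, …, a_r` and
`b₁, …, b_s` there is a nonzero element lying both in some `⟨a_i⟩` and in
some `⟨b_j⟩`. -/
theorem stmt_5 {r s : ℕ}
    (a : Fin r → (ZMod 2 × ZMod 2) × ZMod 4) (b : Fin s → (ZMod 2 × ZMod 2) × ZMod 4)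
    (ha : AddSubgroup.closure (Set.range a) = ⊤)
    (hb : AddSubgroup.closure (Set.range b) = ⊤) :
    ∃ g : (ZMod 2 × ZMod 2) × ZMod 4, g ≠ 0 ∧
      (∃ i, g ∈ AddSubgroup.zmultiples (a i)) ∧ (∃ j, g ∈ AddSubgroup.zmultiples (b j)) := by
  obtain ⟨i, hi⟩ := exists_two_nsmul_eq_of_closure_eq_top ha
  obtain ⟨j, hj⟩ := exists_two_nsmul_eq_of_closure_eq_top hb
  refine ⟨((0, 0), 2), by decide, ⟨i, ?_⟩, ⟨j, ?_⟩⟩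
  · exact hi ▸ AddSubgroup.nsmul_mem_zmultiples (a i) 2
  · exact hj ▸ AddSubgroup.nsmul_mem_zmultiples (b j) 2
end

section
/- There do not exist two triples (a_1,a_2,a_3) and (b_1,b_2,b_3) of generators of G = (Z/4Z)^2 with a_1+a_2+a_3 = 0 and b_1+b_2+b_3 = 0 such that (⟨a_1⟩∪⟨a_2⟩∪⟨a_3⟩) ∩ (⟨b_1⟩∪⟨b_2⟩∪⟨b_3⟩) = {0}. -/
/-!
Reduction mod 2 sends a generating triple of `(ℤ/4)²` with sum zero to a spanning triple of
`(ℤ/2)²` with sum zero, which must consist of the three nonzero vectors. Hence some member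
reduces to `(1, 1)`, i.e. doubles to `(2, 2)`. So `(2, 2)` lies in both unions of cyclic
subgroups.
-/

lemma AddSubgroup.exists_apply_ne_zero_of_closure_eq_top {M N : Type*} [AddGroup M]
    [AddMonoid N] {s : Set M} (hs : AddSubgroup.closure s = ⊤) {f : M →+ N} (hf : f ≠ 0) :
    ∃ x ∈ s, f x ≠ 0 := by
  by_contra! h
  exact hf (AddMonoidHom.eq_of_eqOn_dense hs fun x hx => h x hx)

-- On `ZMod 4`, `2 • t` only depends on `t mod 2`: the hypotheses say the triple reduced mod 2
-- lies on neither coordinate axis of `(ℤ/2)²`.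
lemma exists_two_nsmul_eq_of_sum_eq_zero (a : Fin 3 → ZMod 4 × ZMod 4)
    (hs : a 0 + a 1 + a 2 = 0) (h₁ : ∃ i, 2 • (a i).1 ≠ 0) (h₂ : ∃ i, 2 • (a i).2 ≠ 0) :
    ∃ i, 2 • a i = ((2 : ZMod 4), (2 : ZMod 4)) := by
  simp only [Fin.exists_fin_succ, Fin.succ_zero_eq_one, Fin.succ_one_eq_two,
    IsEmpty.exists_iff, or_false] at h₁ h₂ ⊢
  revert hs h₁ h₂
  generalize a 0 = x, a 1 = y, a 2 = z
  revert x y z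
  decide

lemma exists_two_nsmul_eq_of_closure_eq_top_s7 (a : Fin 3 → ZMod 4 × ZMod 4)
    (ha : AddSubgroup.closure (Set.range a) = ⊤) (hs : a 0 + a 1 + a 2 = 0) :
    ∃ i, 2 • a i = ((2 : ZMod 4), (2 : ZMod 4)) := by
  have hne (f : ZMod 4 × ZMod 4 →+ ZMod 4) (hf : f ≠ 0) : ∃ i, f (a i) ≠ 0 := by
    obtain ⟨_, ⟨i, rfl⟩, hi⟩ := AddSubgroup.exists_apply_ne_zero_of_closure_eq_top ha hf
    exact ⟨i, hi⟩
  refine exists_two_nsmul_eq_of_sum_eq_zero a hs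
    (hne (2 • AddMonoidHom.fst _ _) fun h => ?_) (hne (2 • AddMonoidHom.snd _ _) fun h => ?_)
  · exact absurd (DFunLike.congr_fun h ((1 : ZMod 4), (0 : ZMod 4))) (by decide)
  · exact absurd (DFunLike.congr_fun h ((0 : ZMod 4), (1 : ZMod 4))) (by decide)

lemma two_two_mem_iUnion_zmultiples (a : Fin 3 → ZMod 4 × ZMod 4)
    (ha : AddSubgroup.closure (Set.range a) = ⊤) (hs : a 0 + a 1 + a 2 = 0) :
    ((2 : ZMod 4), (2 : ZMod 4)) ∈
      ⋃ i, (AddSubgroup.zmultiples (a i) : Set (ZMod 4 × ZMod 4)) := by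
  obtain ⟨i, hi⟩ := exists_two_nsmul_eq_of_closure_eq_top_s7 a ha hs
  exact Set.mem_iUnion.2 ⟨i, hi ▸ AddSubgroup.nsmul_mem_zmultiples (a i) 2⟩

/-- There are no two triples of generators of `G = (ℤ/4)²`, each with sum zero,
such that the unions of the cyclic subgroups generated by the members of the
two triples meet only in `0`. -/
theorem stmt_7 :
    ¬ ∃ a b : Fin 3 → ZMod 4 × ZMod 4,
      AddSubgroup.closure (Set.range a) = ⊤ ∧
      AddSubgroup.closure (Set.range b) = ⊤ ∧
      a 0 + a 1 + a 2 = 0 ∧ b 0 + b 1 + b 2 = 0 ∧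
      (⋃ i, (AddSubgroup.zmultiples (a i) : Set (ZMod 4 × ZMod 4))) ∩
        (⋃ j, (AddSubgroup.zmultiples (b j) : Set (ZMod 4 × ZMod 4))) = {0} := by
  rintro ⟨a, b, ha, hb, hsa, hsb, hinter⟩
  have hmem : ((2 : ZMod 4), (2 : ZMod 4)) ∈ ({0} : Set (ZMod 4 × ZMod 4)) :=
    hinter ▸ ⟨two_two_mem_iUnion_zmultiples a ha hsa, two_two_mem_iUnion_zmultiples b hb hsb⟩
  exact absurd (Set.mem_singleton_iff.1 hmem) (by decide)
end

section
/- Let G = (Z/2Z)^4 with basis e_1,...,e_4 and e = e_1+e_2+e_3+e_4. Suppose v_1,...,v_5 ∈ G satisfy: (i) v_1 + ... + v_5 = 0; (ii) v_1,...,v_5 span G; (iii) each v_i has Hamming weight 2 or 3 with respect to the basis. Then exactly two of the v_i have weight 3. -/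
/-!
Summing coordinates is a linear functional on `(ℤ/2)⁴` that reads off the parity of the Hamming
weight; applied to `∑ vᵢ = 0` it shows that the number `k` of weight-3 vectors is even. As the
`vᵢ` span, no nonzero functional vanishes on all of them. For `k = 0` the coordinate sum is such
a functional. For `k = 4` the weight-3 vectors are `e - e_{pᵢ}`, so the remaining weight-2 vector
is `e_{p₁} + ⋯ + e_{p₄}`; the `pᵢ` therefore miss some coordinate `l`, and `x ↦ ∑_{j ≠ l} x_j`
vanishes on all five vectors.
-/

open Finset Matrix Submodule

variable {R ι κ : Type*} [Fintype ι]

theorem span_range_ne_top_of_dotProduct_eq_zero [CommRing R] [DecidableEq ι]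
    {v : κ → ι → R} {c : ι → R} (hc : c ≠ 0) (h : ∀ i, c ⬝ᵥ v i = 0) :
    span R (Set.range v) ≠ ⊤ := fun hv =>
  hc <| (dotProductEquiv R ι).map_eq_zero_iff.mp <| LinearMap.ext_on_range hv h

theorem sum_eq_hammingNorm (x : ι → ZMod 2) : ∑ j, x j = hammingNorm x := by
  rw [hammingNorm, ← sum_filter_ne_zero, card_eq_sum_ones, Nat.cast_sum, Nat.cast_one]
  exact sum_congr rfl fun j hj => Fin.eq_one_of_ne_zero _ (mem_filter.mp hj).2

theorem even_card_filter_odd_hammingNorm [Fintype κ] {v : κ → ι → ZMod 2}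
    (hsum : ∑ i, v i = 0) : Even #{i | Odd (hammingNorm (v i))} := by
  rw [← ZMod.natCast_eq_zero_iff_even, natCast_card_filter]
  calc ∑ i, (if Odd (hammingNorm (v i)) then 1 else 0 : ZMod 2)
      = ∑ i, ∑ j, v i j := by
        refine sum_congr rfl fun i _ => ?_
        rw [sum_eq_hammingNorm]
        split_ifs with h
        · exact (ZMod.natCast_eq_one_iff_odd.mpr h).symm
        · exact (ZMod.natCast_eq_zero_iff_even.mpr (Nat.not_odd_iff_even.mp h)).symm
    _ = ∑ j, (∑ i, v i) j := by rw [sum_comm]; simp only [Finset.sum_apply]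
    _ = 0 := by simp only [hsum, Pi.zero_apply, sum_const_zero]

theorem span_range_ne_top_of_even_hammingNorm [Nonempty ι] [DecidableEq ι]
    {v : κ → ι → ZMod 2} (h : ∀ i, Even (hammingNorm (v i))) :
    span (ZMod 2) (Set.range v) ≠ ⊤ :=
  span_range_ne_top_of_dotProduct_eq_zero one_ne_zero fun i => by
    rw [one_dotProduct, sum_eq_hammingNorm, ZMod.natCast_eq_zero_iff_even]
    exact h i

theorem span_range_ne_top_of_apply_eq_hammingNorm [Nontrivial ι] [DecidableEq ι]
    {v : κ → ι → ZMod 2} (l : ι) (h : ∀ i, v i l = hammingNorm (v i)) :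
    span (ZMod 2) (Set.range v) ≠ ⊤ := by
  obtain ⟨m, hm⟩ := exists_ne l
  refine span_range_ne_top_of_dotProduct_eq_zero (c := 1 - Pi.single l 1) ?_ fun i => ?_
  · intro h0
    simpa [hm] using congrFun h0 m
  · rw [sub_dotProduct, one_dotProduct, single_dotProduct, one_mul, sum_eq_hammingNorm, h,
      sub_self]

theorem exists_eq_one_sub_single_of_hammingNorm_add_one [DecidableEq ι] {x : ι → ZMod 2}
    (h : hammingNorm x + 1 = Fintype.card ι) : ∃ p, x = 1 - Pi.single p 1 := by
  have hzero : #{j | x j = 0} = 1 := by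
    have : #{j | x j = 0} + hammingNorm x = Fintype.card ι :=
      card_filter_add_card_filter_not (s := univ) (fun j => x j = 0)
    omega
  obtain ⟨p, hp⟩ := card_eq_one.mp hzero
  refine ⟨p, funext fun j => ?_⟩
  have hj : x j = 0 ↔ j = p := by simpa using congrArg (j ∈ ·) hp
  by_cases hjp : j = p
  · subst hjp; simpa using hj.mpr rfl
  · have hxj : x j = 1 := Fin.eq_one_of_ne_zero _ (hj.not.mpr hjp)
    simp [hjp, hxj]

theorem sum_pi_single_one_eq_one_of_image_eq_univ [AddCommMonoid R] [One R] [DecidableEq ι]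
    {S : Finset κ} {p : κ → ι} (hS : #S = Fintype.card ι) (hp : S.image p = univ) :
    ∑ i ∈ S, (Pi.single (p i) 1 : ι → R) = 1 := by
  have hinj : Set.InjOn p S := card_image_iff.mp (by rw [hp, card_univ, hS])
  rw [← sum_image (f := fun j => (Pi.single j 1 : ι → R)) hinj, hp]
  exact univ_sum_single 1

theorem exists_apply_eq_hammingNorm_of_card_eq_four (v : Fin 5 → Fin 4 → ZMod 2)
    (hsum : ∑ i, v i = 0) (hw : ∀ i, hammingNorm (v i) = 2 ∨ hammingNorm (v i) = 3)
    (h4 : #{i | hammingNorm (v i) = 3} = 4) : ∃ l, ∀ i, v i l = hammingNorm (v i) := by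
  set S : Finset (Fin 5) := {i | hammingNorm (v i) = 3}
  obtain ⟨s, hsS⟩ : ∃ s, s ∉ S := by
    by_contra! h
    simp [eq_univ_of_forall h] at h4
  have hS : S = univ.erase s :=
    eq_of_subset_of_card_le (fun i hi => mem_erase.mpr ⟨ne_of_mem_of_not_mem hi hsS, mem_univ i⟩)
      (by simp [h4])
  have hs2 : hammingNorm (v s) = 2 := (hw s).resolve_right (by simpa [S] using hsS)
  choose! p hp using fun i (hi : i ∈ S) =>
    exists_eq_one_sub_single_of_hammingNorm_add_one (x := v i) (by simp [(mem_filter.mp hi).2])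
  have hvs : v s = ∑ i ∈ S, Pi.single (p i) 1 := by
    have h := add_sum_erase univ v (mem_univ s)
    have h4zero : (4 • 1 : Fin 4 → ZMod 2) = 0 := by decide
    rwa [← hS, hsum, sum_congr rfl hp, sum_sub_distrib, sum_const, h4, h4zero, zero_sub,
      add_neg_eq_zero] at h
  obtain ⟨l, hl⟩ : ∃ l, l ∉ S.image p := by
    by_contra! h
    have h1 := sum_pi_single_one_eq_one_of_image_eq_univ (R := ZMod 2) (by simpa using h4)
      (eq_univ_of_forall h)
    rw [← hvs] at h1
    exact absurd (h1 ▸ hs2) (by decide)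
  have hpl : ∀ i ∈ S, p i ≠ l := fun i hi h => hl (h ▸ mem_image_of_mem p hi)
  refine ⟨l, fun i => ?_⟩
  by_cases hi : i ∈ S
  · rw [(mem_filter.mp hi).2, hp i hi]
    simp only [Pi.sub_apply, Pi.one_apply, Pi.single_eq_of_ne' (hpl i hi), sub_zero,
      Nat.cast_ofNat]
    decide
  · rw [show i = s by simpa [hS] using hi, hs2, hvs, Finset.sum_apply,
      sum_eq_zero fun j hj => Pi.single_eq_of_ne (hpl j hj).symm _]
    decide

/-- In `G = (ℤ/2)⁴`, if `v₁, …, v₅` have sum zero, span `G`, and each has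
Hamming weight `2` or `3`, then exactly two of them have weight `3`. -/
theorem stmt_11 (v : Fin 5 → (Fin 4 → ZMod 2))
    (hsum : v 0 + v 1 + v 2 + v 3 + v 4 = 0)
    (hspan : Submodule.span (ZMod 2) (Set.range v) = ⊤)
    (hw : ∀ i, (Finset.univ.filter fun j => v i j ≠ 0).card = 2 ∨
               (Finset.univ.filter fun j => v i j ≠ 0).card = 3) :
    (Finset.univ.filter fun i =>
      (Finset.univ.filter fun j => v i j ≠ 0).card = 3).card = 2 := by
  change ∀ i, hammingNorm (v i) = 2 ∨ hammingNorm (v i) = 3 at hw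
  change #{i | hammingNorm (v i) = 3} = 2
  replace hsum : ∑ i, v i = 0 := by rwa [Fin.sum_univ_five]
  have heven : Even #{i | hammingNorm (v i) = 3} := by
    convert even_card_filter_odd_hammingNorm hsum using 3 with i
    rcases hw i with h | h <;> rw [h] <;> decide
  have hne0 : #{i | hammingNorm (v i) = 3} ≠ 0 := fun h0 =>
    span_range_ne_top_of_even_hammingNorm (fun i => by
      rw [(hw i).resolve_right (filter_eq_empty_iff.mp (card_eq_zero.mp h0) (mem_univ i))]
      exact even_two) hspan
  have hne4 : #{i | hammingNorm (v i) = 3} ≠ 4 := fun h4 =>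
    have ⟨l, hl⟩ := exists_apply_eq_hammingNorm_of_card_eq_four v hsum hw h4
    span_range_ne_top_of_apply_eq_hammingNorm l hl hspan
  have hle5 : #{i | hammingNorm (v i) = 3} ≤ 5 := (card_le_univ _).trans_eq (Fintype.card_fin 5)
  obtain ⟨k, hk⟩ := heven
  omega
end

section
/- Let G = (Z/2Z)^4 with basis e_1,...,e_4. Up to permutation of the tuple and up to an automorphism of G fixing the multiset {e_1,e_2,e_3,e_4, e_1+e_2+e_3+e_4}, there is exactly one 5-tuple (v_1,...,v_5) of vectors of weight 2 or 3 which spans G and has sum zero, namely (e+e_1, e+e_2, e_1+e_3, e_2+e_4, e_3+e_4) where e = e_1+e_2+e_3+e_4. -/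
/-!
Map `e₁, e₂, e₃, e₄, e` to the five vertices of the complete graph `K₅`. These five vectors sum to
zero and any four of them form a basis, so every permutation of them extends to an automorphism
of `G`, and the vectors of weight `2` or `3` are exactly the sums of two of them, i.e. the ten
edges of `K₅`. A zero-sum `5`-tuple of edges has all vertex degrees even, so it is either a
pentagon or a triangle together with a doubled edge, and the latter spans at most a
three-dimensional subspace. All pentagons are conjugate under `S₅`. The classification is an
exhaustive check over sorted tuples of edges; the permutation of the tuple is then recovered from
the equality of the sets of entries.
-/

open Finset Matrix Module

theorem Module.Basis.exists_linearEquiv_apply_perm {R M : Type*} [Ring R] [AddCommGroup M]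
    [Module R M] {n : ℕ} (b : Basis (Fin n) R M) {p : Fin (n + 1) → M}
    (hb : ∀ i, p i.castSucc = b i) (hp : ∑ k, p k = 0) (π : Equiv.Perm (Fin (n + 1))) :
    ∃ φ : M ≃ₗ[R] M, ∀ k, φ (p k) = p (π k) := by
  have hlast : p (Fin.last n) = -∑ i, b i := by
    rw [Fin.sum_univ_castSucc] at hp
    simp only [hb] at hp
    exact eq_neg_of_add_eq_zero_right hp
  let f (σ : Equiv.Perm (Fin (n + 1))) : M →ₗ[R] M := b.constr ℕ fun i => p (σ i.castSucc)
  have hf (σ : Equiv.Perm (Fin (n + 1))) (k : Fin (n + 1)) : f σ (p k) = p (σ k) := by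
    induction k using Fin.lastCases with
    | cast i => simp [f, hb]
    | last =>
      have hσ : ∑ k, p (σ k) = 0 := by rw [Equiv.sum_comp σ p, hp]
      rw [Fin.sum_univ_castSucc] at hσ
      simp [f, hlast, eq_neg_of_add_eq_zero_right hσ]
  have hinv (σ τ : Equiv.Perm (Fin (n + 1))) (hστ : σ * τ = 1) : f σ ∘ₗ f τ = LinearMap.id :=
    b.ext fun i => by
      simp only [LinearMap.comp_apply, LinearMap.id_apply, ← hb, hf, ← Equiv.Perm.mul_apply, hστ,
        Equiv.Perm.one_apply]
  exact ⟨.ofLinearMap (f π) (f π⁻¹) (hinv _ _ (mul_inv_cancel π)) (hinv _ _ (inv_mul_cancel π)),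
    hf π⟩

theorem span_range_eq_top_iff_dotProduct {K n ι : Type*} [Field K] [Fintype n] [DecidableEq n]
    (v : ι → n → K) :
    Submodule.span K (Set.range v) = ⊤ ↔ ∀ u, (∀ i, u ⬝ᵥ v i = 0) → u = 0 := by
  constructor
  · intro hv u hu
    have hle : Submodule.span K (Set.range v) ≤ LinearMap.ker (dotProductEquiv K n u) :=
      Submodule.span_le.mpr (Set.range_subset_iff.mpr hu)
    rw [hv, top_le_iff, LinearMap.ker_eq_top] at hle
    exact (dotProductEquiv K n).map_eq_zero_iff.mp hle
  · intro hv
    by_contra hne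
    obtain ⟨f, hf, hmap⟩ :=
      Submodule.exists_dual_map_eq_bot_of_lt_top (lt_top_iff_ne_top.mpr hne) inferInstance
    refine hf ((dotProductEquiv K n).symm.map_eq_zero_iff.mp (hv _ fun i => ?_))
    rw [← dotProductEquiv_apply_apply, LinearEquiv.apply_symm_apply, ← Submodule.mem_bot K, ← hmap]
    exact Submodule.mem_map_of_mem (Submodule.subset_span (Set.mem_range_self i))

theorem exists_perm_comp_eq_of_image_eq {α β : Type*} [Fintype α] [DecidableEq β] {f g : α → β}
    (hg : Function.Injective g) (h : univ.image f = univ.image g) :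
    ∃ σ : Equiv.Perm α, f ∘ σ = g := by
  have hf : Function.Injective f := by
    rw [← Set.injOn_univ, ← coe_univ, ← card_image_iff, h, card_image_of_injective _ hg]
  have hrange : Set.range g = Set.range f := by
    rw [← Set.image_univ, ← Set.image_univ, ← coe_univ, ← coe_image, ← coe_image, h]
  refine ⟨(Equiv.ofInjective g hg).trans
    ((Equiv.setCongr hrange).trans (Equiv.ofInjective f hf).symm), funext fun a => ?_⟩
  simp [Equiv.apply_ofInjective_symm]

namespace PentagonTuple

abbrev V := Fin 4 → ZMod 2

def vertex : Fin 5 → V := ![Pi.single 0 1, Pi.single 1 1, Pi.single 2 1, Pi.single 3 1, 1]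

def edgeVec (e : Fin 5 × Fin 5) : V := vertex e.1 + vertex e.2

def edgeEnds : Fin 10 → Fin 5 × Fin 5 :=
  ![(0, 1), (0, 2), (0, 3), (0, 4), (1, 2), (1, 3), (1, 4), (2, 3), (2, 4), (3, 4)]

def pentagonEnds : Fin 5 → Fin 5 × Fin 5 := ![(4, 0), (4, 1), (0, 2), (1, 3), (2, 3)]

theorem exists_edgeEnds_of_hammingNorm :
    ∀ x : V, hammingNorm x = 2 ∨ hammingNorm x = 3 → ∃ k, x = edgeVec (edgeEnds k) := by
  decide

theorem hammingNorm_pentagon (i : Fin 5) :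
    hammingNorm (edgeVec (pentagonEnds i)) = 2 ∨ hammingNorm (edgeVec (pentagonEnds i)) = 3 := by
  revert i; decide

theorem sum_pentagon : ∑ i, edgeVec (pentagonEnds i) = 0 := by decide

theorem injective_pentagon : Function.Injective (edgeVec ∘ pentagonEnds) := by decide

theorem span_pentagon : Submodule.span (ZMod 2) (Set.range (edgeVec ∘ pentagonEnds)) = ⊤ := by
  rw [span_range_eq_top_iff_dotProduct]; decide

theorem exists_linearEquiv_vertex_perm (π : Equiv.Perm (Fin 5)) :
    ∃ φ : V ≃ₗ[ZMod 2] V, ∀ k, φ (vertex k) = vertex (π k) :=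
  (Pi.basisFun (ZMod 2) (Fin 4)).exists_linearEquiv_apply_perm
    (by simp only [Pi.basisFun_apply]; decide) (by decide) π

-- The interleaved quantifiers let `decide` prune unsorted prefixes, so only the 2002 sorted tuples
-- are visited.
set_option synthInstance.maxSize 256 in
theorem exists_perm_image_eq_pentagon_of_le :
    ∀ k₀ k₁ : Fin 10, k₀ ≤ k₁ → ∀ k₂, k₁ ≤ k₂ → ∀ k₃, k₂ ≤ k₃ → ∀ k₄, k₃ ≤ k₄ →
    edgeVec (edgeEnds k₀) + edgeVec (edgeEnds k₁) + edgeVec (edgeEnds k₂) +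
      edgeVec (edgeEnds k₃) + edgeVec (edgeEnds k₄) = 0 →
    (∀ u : V, (∀ i, u ⬝ᵥ edgeVec (edgeEnds (![k₀, k₁, k₂, k₃, k₄] i)) = 0) → u = 0) →
    ∃ π : Equiv.Perm (Fin 5),
      univ.image (fun i => edgeVec (Prod.map π π (edgeEnds (![k₀, k₁, k₂, k₃, k₄] i)))) =
        univ.image (edgeVec ∘ pentagonEnds) := by
  decide +kernel

theorem exists_perm_image_eq_pentagon {k : Fin 5 → Fin 10} (hk : Monotone k)
    (hsum : ∑ i, edgeVec (edgeEnds (k i)) = 0)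
    (hspan : Submodule.span (ZMod 2) (Set.range (edgeVec ∘ edgeEnds ∘ k)) = ⊤) :
    ∃ π : Equiv.Perm (Fin 5), univ.image (fun i => edgeVec (Prod.map π π (edgeEnds (k i)))) =
      univ.image (edgeVec ∘ pentagonEnds) := by
  rw [span_range_eq_top_iff_dotProduct] at hspan
  rw [Fin.sum_univ_five] at hsum
  have hk' : k = ![k 0, k 1, k 2, k 3, k 4] := by funext i; fin_cases i <;> rfl
  rw [hk'] at hspan ⊢
  exact exists_perm_image_eq_pentagon_of_le _ _ (hk (by decide)) _ (hk (by decide)) _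
    (hk (by decide)) _ (hk (by decide)) hsum hspan

theorem exists_linearEquiv_perm_eq_pentagon (v : Fin 5 → V)
    (hv : ∀ i, hammingNorm (v i) = 2 ∨ hammingNorm (v i) = 3)
    (hspan : Submodule.span (ZMod 2) (Set.range v) = ⊤) (hsum : ∑ i, v i = 0) :
    ∃ φ : V ≃ₗ[ZMod 2] V, φ '' Set.range vertex = Set.range vertex ∧
      ∃ σ : Equiv.Perm (Fin 5), ∀ i, φ (v (σ i)) = edgeVec (pentagonEnds i) := by
  choose k hk using fun i => exists_edgeEnds_of_hammingNorm (v i) (hv i)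
  obtain ⟨ρ, hρ⟩ : ∃ ρ : Equiv.Perm (Fin 5), Monotone (k ∘ ρ) := ⟨_, Tuple.monotone_sort k⟩
  have hvρ : edgeVec ∘ edgeEnds ∘ (k ∘ ρ) = v ∘ ρ := funext fun i => (hk (ρ i)).symm
  obtain ⟨π, hπ⟩ := exists_perm_image_eq_pentagon hρ
    (by simp only [Function.comp_apply, ← hk, Equiv.sum_comp, hsum])
    (by rw [hvρ, ρ.surjective.range_comp, hspan])
  obtain ⟨φ, hφ⟩ := exists_linearEquiv_vertex_perm π
  have hφ_edge (e : Fin 5 × Fin 5) : φ (edgeVec e) = edgeVec (Prod.map π π e) := by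
    simp [edgeVec, hφ]
  obtain ⟨τ, hτ⟩ := exists_perm_comp_eq_of_image_eq (f := φ ∘ v ∘ ρ) injective_pentagon (by
    rw [← hπ]
    congr 1
    funext i
    simp [hk, hφ_edge])
  refine ⟨φ, ?_, τ.trans ρ, fun i => congrFun hτ i⟩
  rw [← Set.range_comp, show ⇑φ ∘ vertex = vertex ∘ π from funext hφ, π.surjective.range_comp]

end PentagonTuple

open PentagonTuple in
/-- In `G = (ℤ/2)⁴`, up to permutation of the tuple and an automorphism of `G`
fixing the set `{e₁, e₂, e₃, e₄, e}` (where `e = e₁+e₂+e₃+e₄`), there is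
exactly one `5`-tuple of vectors of weight `2` or `3` spanning `G` with sum
zero, namely `(e+e₁, e+e₂, e₁+e₃, e₂+e₄, e₃+e₄)`. -/
theorem stmt_12 :
    let eb : Fin 4 → (Fin 4 → ZMod 2) := fun i => Pi.single i 1
    let e : Fin 4 → ZMod 2 := fun _ => 1
    let S : Set (Fin 4 → ZMod 2) := {eb 0, eb 1, eb 2, eb 3, e}
    let wt : (Fin 4 → ZMod 2) → ℕ := fun v => (Finset.univ.filter fun j => v j ≠ 0).card
    let t : Fin 5 → (Fin 4 → ZMod 2) :=
      ![e + eb 0, e + eb 1, eb 0 + eb 2, eb 1 + eb 3, eb 2 + eb 3]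
    ((∀ i, wt (t i) = 2 ∨ wt (t i) = 3) ∧
      Submodule.span (ZMod 2) (Set.range t) = ⊤ ∧
      t 0 + t 1 + t 2 + t 3 + t 4 = 0) ∧
    ∀ v : Fin 5 → (Fin 4 → ZMod 2),
      (∀ i, wt (v i) = 2 ∨ wt (v i) = 3) →
      Submodule.span (ZMod 2) (Set.range v) = ⊤ →
      v 0 + v 1 + v 2 + v 3 + v 4 = 0 →
      ∃ φ : (Fin 4 → ZMod 2) ≃ₗ[ZMod 2] (Fin 4 → ZMod 2),
        φ '' S = S ∧ ∃ σ : Equiv.Perm (Fin 5), ∀ i, φ (v (σ i)) = t i := by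
  intro eb e S wt t
  have hS : S = Set.range vertex := by
    simp only [S, vertex, Matrix.range_cons, Matrix.range_empty, Set.union_empty,
      Set.singleton_union]
    rfl
  have ht : t = edgeVec ∘ pentagonEnds := by
    funext i; fin_cases i <;> rfl
  rw [hS, ht]
  refine ⟨⟨hammingNorm_pentagon, span_pentagon, by rw [← Fin.sum_univ_five]; exact sum_pentagon⟩,
    fun v hv hspan hsum => exists_linearEquiv_perm_eq_pentagon v hv hspan ?_⟩
  rwa [Fin.sum_univ_five]
end

section
/- Let G = (Z/3Z)^2 and let a_1, a_2, a_3, a_4 be elements generating G with a_1 + a_2 + a_3 + a_4 = 0, such that the union ⟨a_1⟩∪⟨a_2⟩∪⟨a_3⟩∪⟨a_4⟩ consists of exactly 4 nonzero elements together with 0. Then up to permutation (a_1,a_2,a_3,a_4) = (a, b, -a, -b) for some basis (a,b) of G. -/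
/-!
Since the `aᵢ` span the plane, two of them, `x` and `y`, are linearly independent, and the union
of the cyclic subgroups already contains the four distinct nonzero vectors `±x, ±y`. The
cardinality hypothesis therefore forces every `aₖ` to lie in `{0, ±x, ±y}`. Writing the `aₖ` in
the basis `(x, y)`, the relation `∑ aₖ = 0` becomes a condition on coordinates in `{0, ±1}`, and
a finite check shows that the only solutions containing both `x` and `y` are the rearrangements
of `(x, y, -x, -y)`.
-/

open Function Module Submodule

lemma exists_linearIndependent_pair_of_span_eq_top {K V ι : Type*} [Field K] [AddCommGroup V]
    [Module K V] {a : ι → V} (ha : span K (Set.range a) = ⊤) (hV : 1 < finrank K V) :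
    ∃ i j, LinearIndependent K ![a i, a j] := by
  obtain ⟨j, hj⟩ : ∃ j, a j ≠ 0 := by
    by_contra! h
    have hbot : span K (Set.range a) = ⊥ := by
      rw [span_eq_bot]
      rintro _ ⟨k, rfl⟩
      exact h k
    rw [← finrank_top, ← ha, hbot, finrank_bot] at hV
    exact absurd hV (by simp)
  obtain ⟨i, hi⟩ : ∃ i, a i ∉ K ∙ a j := by
    by_contra! h
    have htop : K ∙ a j = ⊤ := by
      rw [eq_top_iff, ← ha, span_le]
      rintro _ ⟨k, rfl⟩
      exact h k
    have hrank := finrank_span_singleton (K := K) hj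
    rw [htop, finrank_top] at hrank
    omega
  exact ⟨i, j, linearIndependent_fin2.mpr ⟨hj, fun c hc => hi (mem_span_singleton.mpr ⟨c, hc⟩)⟩⟩

/-- The coordinates of the entries of `axes x y` in the basis `(x, y)`. -/
def axisCoeff : Fin 5 → ZMod 3 × ZMod 3 := ![(0, 0), (1, 0), (-1, 0), (0, 1), (0, -1)]

lemma axisCoeff_injective : Injective axisCoeff := by decide

set_option maxRecDepth 10000 in
lemma exists_perm_eq_of_sum_axisCoeff_eq_zero : ∀ d : Fin 4 → Fin 5,
    ∑ k, axisCoeff (d k) = 0 → (∃ k, d k = 1) → (∃ k, d k = 3) →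
    ∃ σ : Equiv.Perm (Fin 4), d ∘ σ = ![1, 3, 2, 4] := by
  decide

section Axes

variable {V : Type*} [AddCommGroup V]

def axes (x y : V) : Fin 5 → V := ![0, x, -x, y, -y]

lemma range_axes (x y : V) : Set.range (axes x y) = {0, x, -x, y, -y} := by
  simp only [axes, Matrix.range_cons, Matrix.range_empty, Set.union_empty, Set.singleton_union]

variable [Module (ZMod 3) V] {x y : V}

lemma axes_apply (x y : V) (t : Fin 5) :
    axes x y t = (axisCoeff t).1 • x + (axisCoeff t).2 • y := by
  fin_cases t <;> simp [axes, axisCoeff]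

lemma LinearIndependent.injective_axes (h : LinearIndependent (ZMod 3) ![x, y]) :
    Injective (axes x y) := by
  intro t u htu
  rw [axes_apply, axes_apply] at htu
  obtain ⟨h₁, h₂⟩ := LinearIndependent.pair_iff.mp h ((axisCoeff t).1 - (axisCoeff u).1)
    ((axisCoeff t).2 - (axisCoeff u).2) (by linear_combination (norm := module) htu)
  exact axisCoeff_injective (Prod.ext (sub_eq_zero.mp h₁) (sub_eq_zero.mp h₂))

lemma LinearIndependent.ncard_pair_neg_eq_four (h : LinearIndependent (ZMod 3) ![x, y]) :
    ({x, -x, y, -y} : Set V).ncard = 4 := by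
  have hinj := h.injective_axes
  exact Set.ncard_eq_four.mpr ⟨x, -x, y, -y, hinj.ne (by decide : (1 : Fin 5) ≠ 2),
    hinj.ne (by decide : (1 : Fin 5) ≠ 3), hinj.ne (by decide : (1 : Fin 5) ≠ 4),
    hinj.ne (by decide : (2 : Fin 5) ≠ 3), hinj.ne (by decide : (2 : Fin 5) ≠ 4),
    hinj.ne (by decide : (3 : Fin 5) ≠ 4), rfl⟩

lemma LinearIndependent.exists_perm_eq_of_mem_axes (h : LinearIndependent (ZMod 3) ![x, y])
    {a : Fin 4 → V} (ha : ∀ k, a k ∈ ({0, x, -x, y, -y} : Set V)) (hsum : ∑ k, a k = 0)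
    (hx : ∃ k, a k = x) (hy : ∃ k, a k = y) :
    ∃ σ : Equiv.Perm (Fin 4), a ∘ σ = ![x, y, -x, -y] := by
  choose d hd using fun k => range_axes x y ▸ ha k
  have hinj := h.injective_axes
  have hcoeff : ∑ k, axisCoeff (d k) = 0 := by
    simp only [← hd, axes_apply, Finset.sum_add_distrib, ← Finset.sum_smul] at hsum
    obtain ⟨h₁, h₂⟩ := LinearIndependent.pair_iff.mp h _ _ hsum
    exact Prod.ext (by simpa [Prod.fst_sum] using h₁) (by simpa [Prod.snd_sum] using h₂)
  obtain ⟨σ, hσ⟩ := exists_perm_eq_of_sum_axisCoeff_eq_zero d hcoeff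
    (hx.imp fun k hk => hinj ((hd k).trans hk)) (hy.imp fun k hk => hinj ((hd k).trans hk))
  refine ⟨σ, funext fun k => ?_⟩
  rw [comp_apply, ← hd, ← comp_apply (f := d), hσ]
  fin_cases k <;> rfl

end Axes

/-- If `a₁, a₂, a₃, a₄` generate `G = (ℤ/3)²` with sum zero and the union
`⟨a₁⟩ ∪ ⟨a₂⟩ ∪ ⟨a₃⟩ ∪ ⟨a₄⟩` has exactly `4` nonzero elements, then up to
permutation the tuple is `(a, b, -a, -b)` for some basis `(a, b)` of `G`. -/
theorem stmt_14 (a : Fin 4 → (Fin 2 → ZMod 3))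
    (hgen : Submodule.span (ZMod 3) (Set.range a) = ⊤)
    (hsum : a 0 + a 1 + a 2 + a 3 = 0)
    (hcard : Set.ncard {g : Fin 2 → ZMod 3 | g ≠ 0 ∧
      ∃ i, g ∈ AddSubgroup.zmultiples (a i)} = 4) :
    ∃ x y : Fin 2 → ZMod 3,
      LinearIndependent (ZMod 3) ![x, y] ∧
      Submodule.span (ZMod 3) {x, y} = ⊤ ∧
      ∃ σ : Equiv.Perm (Fin 4), a ∘ σ = ![x, y, -x, -y] := by
  obtain ⟨j, i, hind⟩ := exists_linearIndependent_pair_of_span_eq_top hgen (by simp)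
  set S := {g : Fin 2 → ZMod 3 | g ≠ 0 ∧ ∃ i, g ∈ AddSubgroup.zmultiples (a i)}
  have hpm : ∀ k, a k ≠ 0 → a k ∈ S ∧ -a k ∈ S := fun k hk =>
    ⟨⟨hk, k, AddSubgroup.mem_zmultiples _⟩,
      ⟨neg_ne_zero.mpr hk, k, neg_mem (AddSubgroup.mem_zmultiples _)⟩⟩
  have hsub : {a j, -a j, a i, -a i} ⊆ S := by
    obtain ⟨hj, hj'⟩ := hpm j (hind.ne_zero 0)
    obtain ⟨hi, hi'⟩ := hpm i (hind.ne_zero 1)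
    simpa only [Set.insert_subset_iff, Set.singleton_subset_iff] using ⟨hj, hj', hi, hi'⟩
  have hS : S = {a j, -a j, a i, -a i} :=
    (Set.eq_of_subset_of_ncard_le hsub (by rw [hind.ncard_pair_neg_eq_four, hcard])
      (Set.toFinite _)).symm
  have haxes : ∀ k, a k ∈ ({0, a j, -a j, a i, -a i} : Set _) := fun k => by
    by_cases hk : a k = 0
    · exact Or.inl hk
    · exact Or.inr (hS ▸ (hpm k hk).1)
  obtain ⟨σ, hσ⟩ := hind.exists_perm_eq_of_mem_axes haxes
    (by simpa [Fin.sum_univ_four] using hsum) ⟨j, rfl⟩ ⟨i, rfl⟩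
  refine ⟨a j, a i, hind, ?_, σ, hσ⟩
  rw [← Matrix.range_cons_cons_empty (u := ![])]
  exact hind.span_eq_top_of_card_eq_finrank' (by simp)
end

section
/- Let G = (Z/5Z)^2. Any 6-tuple (a_1,a_2,a_3,b_1,b_2,b_3) with a_1+a_2+a_3 = 0, b_1+b_2+b_3 = 0, each triple generating G, and (⟨a_1⟩∪⟨a_2⟩∪⟨a_3⟩) ∩ (⟨b_1⟩∪⟨b_2⟩∪⟨b_3⟩) = {0}, is equivalent under the action of GL(2, Z/5Z) × S_3 × S_3 (acting by automorphisms of G and by permuting each triple) to (e_1, e_2, -(e_1+e_2), λ(e_1+2e_2), λ(3e_1+4e_2), λ(e_1+4e_2)) for some λ ∈ {1,2,3,4}. -/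
/-!
Both triples span `G`, so `(a₁, a₂)` is a basis and the automorphism `φ` taking it to `(e₁, e₂)`
takes `a₃` to `-(e₁ + e₂)`. The disjointness hypothesis then keeps every `φ bⱼ` off the lines
`⟨e₁⟩, ⟨e₂⟩, ⟨e₁ + e₂⟩`, i.e. on the three remaining lines, of slopes `2, 3, 4`. As `φ b₁, φ b₂`
are independent and `φ b₃ = -φ b₁ - φ b₂`, each of these lines carries exactly one `φ bⱼ`, and
`x (1, 2) + y (1, 3) + z (1, 4) = 0` forces `(x, y, z) = λ (1, 3, 1)`. This last step is a finite
check over the pairs `(φ b₁, φ b₂)`.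
-/

open Submodule

theorem apply_eq_vec_of_add_add_eq_zero {M : Type*} [AddCommGroup M] {c : Fin 3 → M}
    (h : c 0 + c 1 + c 2 = 0) (i : Fin 3) : c i = ![c 0, c 1, -c 0 - c 1] i := by
  fin_cases i
  · rfl
  · rfl
  · change c 2 = -c 0 - c 1
    rw [← sub_eq_zero, ← h]
    abel

theorem span_pair_eq_top_of_closure_range_eq_top {R M : Type*} [Ring R] [AddCommGroup M]
    [Module R M] {c : Fin 3 → M} (hsum : c 0 + c 1 + c 2 = 0)
    (hgen : AddSubgroup.closure (Set.range c) = ⊤) : span R {c 0, c 1} = ⊤ := by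
  refine eq_top_iff.2 fun x _ => ?_
  have hx : x ∈ AddSubgroup.closure (Set.range c) := hgen ▸ AddSubgroup.mem_top x
  refine (AddSubgroup.closure_le (K := (span R {c 0, c 1}).toAddSubgroup)).2 ?_ hx
  rintro _ ⟨i, rfl⟩
  rw [apply_eq_vec_of_add_add_eq_zero hsum i]
  fin_cases i
  · exact subset_span (by simp)
  · exact subset_span (by simp)
  · exact sub_mem (neg_mem (subset_span (by simp))) (subset_span (by simp))

theorem cross_ne_zero_of_span_pair_eq_top {R : Type*} [CommRing R] [Nontrivial R] {v w : R × R}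
    (h : span R {v, w} = ⊤) : v.1 * w.2 - v.2 * w.1 ≠ 0 := by
  obtain ⟨m, n, hmn⟩ := mem_span_pair.1 (h ▸ mem_top : ((1, 0) : R × R) ∈ span R {v, w})
  obtain ⟨p, q, hpq⟩ := mem_span_pair.1 (h ▸ mem_top : ((0, 1) : R × R) ∈ span R {v, w})
  obtain ⟨e1, e2⟩ := Prod.ext_iff.1 hmn
  obtain ⟨e3, e4⟩ := Prod.ext_iff.1 hpq
  simp only [Prod.fst_add, Prod.snd_add, Prod.smul_fst, Prod.smul_snd, smul_eq_mul] at e1 e2 e3 e4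
  -- `det [[m, n], [p, q]] * det [[v.1, v.2], [w.1, w.2]] = det 1`
  refine left_ne_zero_of_mul_eq_one (b := m * q - n * p) ?_
  linear_combination (p * v.2 + q * w.2) * e1 + e4 - (p * v.1 + q * w.1) * e2

theorem exists_linearEquiv_prod_of_span_pair_eq_top {R M : Type*} [CommRing R] [Nontrivial R]
    [AddCommGroup M] [Module R M] (hM : Module.finrank R M = 2) {v w : M}
    (h : span R {v, w} = ⊤) : ∃ φ : M ≃ₗ[R] R × R, φ v = (1, 0) ∧ φ w = (0, 1) := by
  let B := basisOfTopLeSpanOfCardEqFinrank (R := R) ![v, w]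
    (by rw [Matrix.range_cons_cons_empty, h]) (by rw [hM, Fintype.card_fin])
  refine ⟨B.equivFun.trans (LinearEquiv.finTwoArrow R R), ?_, ?_⟩
  · simpa [B] using B.equivFun_self 0
  · simpa [B] using B.equivFun_self 1

theorem eq_zero_of_eq_smul_of_zmultiples_disjoint {n : ℕ} {M ι κ : Type*} [AddCommGroup M]
    [Module (ZMod n) M] {a : ι → M} {b : κ → M}
    (hdisj : ∀ g : M, (∃ i, g ∈ AddSubgroup.zmultiples (a i)) →
      (∃ j, g ∈ AddSubgroup.zmultiples (b j)) → g = 0)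
    {i : ι} {j : κ} {c : ZMod n} (h : b j = c • a i) : b j = 0 :=
  hdisj (b j) ⟨i, h ▸ ZMod.smul_mem (AddSubgroup.mem_zmultiples (a i)) c⟩
    ⟨j, AddSubgroup.mem_zmultiples (b j)⟩

/-- The union of the lines `⟨(1, 0)⟩`, `⟨(0, 1)⟩`, `⟨(-1, -1)⟩` spanned by a normalised triple. -/
def OnAxesOrDiagonal {R : Type*} [Zero R] (r : R × R) : Prop :=
  r.1 = 0 ∨ r.2 = 0 ∨ r.1 = r.2

instance {R : Type*} [Zero R] [DecidableEq R] : DecidablePred (OnAxesOrDiagonal (R := R)) :=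
  fun r => inferInstanceAs (Decidable (r.1 = 0 ∨ r.2 = 0 ∨ r.1 = r.2))

theorem eq_zero_of_onAxesOrDiagonal {n : ℕ} {M ι : Type*} [AddCommGroup M]
    [Module (ZMod n) M] {a : Fin 3 → M} {b : ι → M}
    (hdisj : ∀ g : M, (∃ i, g ∈ AddSubgroup.zmultiples (a i)) →
      (∃ j, g ∈ AddSubgroup.zmultiples (b j)) → g = 0)
    (φ : M ≃ₗ[ZMod n] ZMod n × ZMod n)
    (ha : ∀ i, φ (a i) = ![((1 : ZMod n), (0 : ZMod n)), (0, 1), (-1, -1)] i) (j : ι)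
    (h : OnAxesOrDiagonal (φ (b j))) : φ (b j) = 0 := by
  obtain ⟨i, c, hc⟩ : ∃ i, ∃ c : ZMod n, φ (b j) = c • φ (a i) := by
    rcases h with h | h | h
    · exact ⟨1, (φ (b j)).2, by rw [ha]; ext <;> simp [h]⟩
    · exact ⟨0, (φ (b j)).1, by rw [ha]; ext <;> simp [h]⟩
    · exact ⟨2, -(φ (b j)).1, by rw [ha]; ext <;> simp [h]⟩
  rw [eq_zero_of_eq_smul_of_zmultiples_disjoint hdisj (φ.injective (by rw [hc, map_smul])),
    map_zero]

theorem exists_perm_eq_smul_of_cross_ne_zero (p q : ZMod 5 × ZMod 5)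
    (hlines : ∀ r ∈ [p, q, -p - q], OnAxesOrDiagonal r → r = 0)
    (hpq : p.1 * q.2 - p.2 * q.1 ≠ 0) :
    ∃ l : ZMod 5, l ≠ 0 ∧ ∃ τ : Equiv.Perm (Fin 3),
      ∀ i, ![p, q, -p - q] (τ i) = ![l • ((1 : ZMod 5), (2 : ZMod 5)),
        l • ((3 : ZMod 5), (4 : ZMod 5)), l • ((1 : ZMod 5), (4 : ZMod 5))] i := by
  revert p q
  decide

/-- A pair of spherical systems of generators of `G = (ℤ/5)²` whose cyclic
subgroups meet only in `0` is equivalent, under `GL(2, ℤ/5) × S₃ × S₃`, to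
`((e₁, e₂, -(e₁+e₂)), (λ(e₁+2e₂), λ(3e₁+4e₂), λ(e₁+4e₂)))` for some
nonzero `λ`. -/
theorem stmt_15 (a b : Fin 3 → ZMod 5 × ZMod 5)
    (hagen : AddSubgroup.closure (Set.range a) = ⊤)
    (hbgen : AddSubgroup.closure (Set.range b) = ⊤)
    (hasum : a 0 + a 1 + a 2 = 0) (hbsum : b 0 + b 1 + b 2 = 0)
    (hdisj : ∀ g : ZMod 5 × ZMod 5,
      (∃ i, g ∈ AddSubgroup.zmultiples (a i)) →
      (∃ j, g ∈ AddSubgroup.zmultiples (b j)) → g = 0) :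
    ∃ l : ZMod 5, l ≠ 0 ∧
      ∃ φ : (ZMod 5 × ZMod 5) ≃ₗ[ZMod 5] (ZMod 5 × ZMod 5),
        ∃ σ τ : Equiv.Perm (Fin 3),
          (∀ i, φ (a (σ i)) = ![((1 : ZMod 5), (0 : ZMod 5)), (0, 1), (-1, -1)] i) ∧
          (∀ i, φ (b (τ i)) = ![l • ((1 : ZMod 5), (2 : ZMod 5)),
            l • ((3 : ZMod 5), (4 : ZMod 5)), l • ((1 : ZMod 5), (4 : ZMod 5))] i) := by
  have : Fact (1 < 5) := ⟨by norm_num⟩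
  obtain ⟨φ, hφ0, hφ1⟩ := exists_linearEquiv_prod_of_span_pair_eq_top (by simp)
    (span_pair_eq_top_of_closure_range_eq_top (R := ZMod 5) hasum hagen)
  have ha : ∀ i, φ (a i) = ![((1 : ZMod 5), (0 : ZMod 5)), (0, 1), (-1, -1)] i := fun i => by
    rw [← Function.comp_apply (f := φ),
      apply_eq_vec_of_add_add_eq_zero (c := φ ∘ a) (by simp [← map_add, hasum])]
    fin_cases i <;> simp [hφ0, hφ1]
  have hb : ∀ j, φ (b j) = ![φ (b 0), φ (b 1), -φ (b 0) - φ (b 1)] j :=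
    apply_eq_vec_of_add_add_eq_zero (c := φ ∘ b) (by simp [← map_add, hbsum])
  have hcross : (φ (b 0)).1 * (φ (b 1)).2 - (φ (b 0)).2 * (φ (b 1)).1 ≠ 0 := by
    refine cross_ne_zero_of_span_pair_eq_top ?_
    rw [← Set.image_pair, ← LinearEquiv.coe_coe, ← map_span,
      span_pair_eq_top_of_closure_range_eq_top hbsum hbgen, Submodule.map_top, LinearEquiv.range]
  have hoff := eq_zero_of_onAxesOrDiagonal hdisj φ ha
  have hb2 : φ (b 2) = -φ (b 0) - φ (b 1) := hb 2
  obtain ⟨l, hl, τ, hτ⟩ := exists_perm_eq_smul_of_cross_ne_zero _ _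
    (by simpa only [List.forall_mem_cons, List.not_mem_nil, IsEmpty.forall_iff, implies_true,
      and_true] using ⟨hoff 0, hoff 1, hb2 ▸ hoff 2⟩) hcross
  exact ⟨l, hl, φ, 1, τ, ha, fun i => (hb (τ i)).trans (hτ i)⟩
end

section
/- The set of 6-tuples (a_1,a_2,a_3,b_1,b_2,b_3) in G = (Z/5Z)^2 with a_1+a_2+a_3 = b_1+b_2+b_3 = 0, each triple generating G, and (⟨a_1⟩∪⟨a_2⟩∪⟨a_3⟩) ∩ (⟨b_1⟩∪⟨b_2⟩∪⟨b_3⟩) = {0}, decomposes into exactly two orbits under the action of GL(2,Z/5Z) × S_3 × S_3. -/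
/-!
For a triple with `a₀ + a₁ + a₂ = 0` in `G = 𝔽₅²`, generating `G` means that `a₀, a₁` is a basis,
and for nonzero `u, v` the groups `⟨u⟩, ⟨v⟩` meet only in `0` iff `u, v` are linearly independent.
Sending the basis `a₀, a₁` to the standard one normalises the first triple of every datum to
`e₁, e₂, -e₁ - e₂`. The linear maps carrying this triple to a permutation of itself are the six
maps permuting it, so the classification becomes a finite check on the second triple: there are
24 normalised data, falling into two classes of 12.
-/

/-- A pair of spherical systems of generators of `G = (ℤ/5)²` whose cyclic
subgroups meet only in `0`. -/
def BeauvilleDatum (p : (Fin 3 → ZMod 5 × ZMod 5) × (Fin 3 → ZMod 5 × ZMod 5)) : Prop :=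
  AddSubgroup.closure (Set.range p.1) = ⊤ ∧
  AddSubgroup.closure (Set.range p.2) = ⊤ ∧
  p.1 0 + p.1 1 + p.1 2 = 0 ∧ p.2 0 + p.2 1 + p.2 2 = 0 ∧
  ∀ g : ZMod 5 × ZMod 5,
    (∃ i, g ∈ AddSubgroup.zmultiples (p.1 i)) →
    (∃ j, g ∈ AddSubgroup.zmultiples (p.2 j)) → g = 0

/-- Equivalence of such pairs under `GL(2, ℤ/5) × S₃ × S₃`: a linear
automorphism of `G` applied to all entries, together with separate
permutations of the two triples. -/
def BeauvilleEquiv (p q : (Fin 3 → ZMod 5 × ZMod 5) × (Fin 3 → ZMod 5 × ZMod 5)) : Prop :=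
  ∃ φ : (ZMod 5 × ZMod 5) ≃ₗ[ZMod 5] (ZMod 5 × ZMod 5),
    ∃ σ τ : Equiv.Perm (Fin 3),
      (∀ i, φ (p.1 (σ i)) = q.1 i) ∧ (∀ i, φ (p.2 (τ i)) = q.2 i)

open Module Submodule

theorem Submodule.span_zmod_eq_addSubgroupClosure {n : ℕ} {M : Type*} [AddCommGroup M]
    [Module (ZMod n) M] (s : Set M) :
    (span (ZMod n) s).toAddSubgroup = AddSubgroup.closure s := by
  rw [← span_int_eq_addSubgroupClosure, ← restrictScalars_span ℤ (ZMod n) ZMod.intCast_surjective]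
  rfl

theorem AddSubgroup.zmultiples_eq_toAddSubgroup_span_singleton {n : ℕ} {M : Type*}
    [AddCommGroup M] [Module (ZMod n) M] (u : M) :
    zmultiples u = (ZMod n ∙ u).toAddSubgroup := by
  rw [zmultiples_eq_closure, span_zmod_eq_addSubgroupClosure]

theorem disjoint_zmultiples_iff_linearIndependent {p : ℕ} [Fact p.Prime] {M : Type*}
    [AddCommGroup M] [Module (ZMod p) M] {u v : M} (hu : u ≠ 0) (hv : v ≠ 0) :
    Disjoint (AddSubgroup.zmultiples u) (AddSubgroup.zmultiples v) ↔
      LinearIndependent (ZMod p) ![u, v] := by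
  have hdisj : Disjoint (ZMod p ∙ u).toAddSubgroup (ZMod p ∙ v).toAddSubgroup ↔
      Disjoint (ZMod p ∙ u) (ZMod p ∙ v) := by
    simp only [AddSubgroup.disjoint_def, disjoint_def, mem_toAddSubgroup]
  rw [AddSubgroup.zmultiples_eq_toAddSubgroup_span_singleton (n := p),
    AddSubgroup.zmultiples_eq_toAddSubgroup_span_singleton (n := p), hdisj,
    disjoint_span_singleton' hv, mem_span_singleton, LinearIndependent.pair_iff' hu]
  simp

theorem forall_zmultiples_eq_zero_iff_linearIndependent {p : ℕ} [Fact p.Prime] {M ι κ : Type*}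
    [AddCommGroup M] [Module (ZMod p) M] {a : ι → M} {b : κ → M} (ha : ∀ i, a i ≠ 0)
    (hb : ∀ j, b j ≠ 0) :
    (∀ g, (∃ i, g ∈ AddSubgroup.zmultiples (a i)) → (∃ j, g ∈ AddSubgroup.zmultiples (b j)) →
      g = 0) ↔ ∀ i j, LinearIndependent (ZMod p) ![a i, b j] := by
  simp_rw [← disjoint_zmultiples_iff_linearIndependent (ha _) (hb _), AddSubgroup.disjoint_def]
  exact ⟨fun h i j g hi hj => h g ⟨i, hi⟩ ⟨j, hj⟩, fun h g ⟨i, hi⟩ ⟨j, hj⟩ => h i j hi hj⟩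

section TwoDimensional

variable {K V : Type*} [Field K] [AddCommGroup V] [Module K V] {a : Fin 3 → V}

theorem ne_zero_of_linearIndependent_of_sum_eq_zero (hsum : a 0 + a 1 + a 2 = 0)
    (h : LinearIndependent K ![a 0, a 1]) (i : Fin 3) : a i ≠ 0 := by
  have h2 : a 2 ≠ 0 := by
    intro h2
    rw [h2, add_zero] at hsum
    simpa using LinearIndependent.pair_iff.mp h 1 1 (by simpa using hsum)
  fin_cases i
  exacts [by simpa using h.ne_zero 0, by simpa using h.ne_zero 1, h2]

theorem span_range_eq_top_iff_linearIndependent (hV : finrank K V = 2)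
    (hsum : a 0 + a 1 + a 2 = 0) :
    span K (Set.range a) = ⊤ ↔ LinearIndependent K ![a 0, a 1] := by
  have hspan : span K (Set.range a) = span K (Set.range ![a 0, a 1]) := by
    have h2 : a 2 = -(a 0 + a 1) := eq_neg_of_add_eq_zero_right hsum
    apply le_antisymm <;> rw [span_le] <;> rintro - ⟨i, rfl⟩
    · fin_cases i
      · exact subset_span ⟨0, rfl⟩
      · exact subset_span ⟨1, rfl⟩
      · simp only [Fin.reduceFinMk, Fin.isValue, h2]
        exact neg_mem (add_mem (subset_span ⟨0, rfl⟩) (subset_span ⟨1, rfl⟩))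
    · fin_cases i
      · exact subset_span ⟨0, rfl⟩
      · exact subset_span ⟨1, rfl⟩
  rw [hspan]
  refine ⟨fun h => linearIndependent_of_top_le_span_of_card_eq_finrank h.ge (by simp [hV]),
    fun h => h.span_eq_top_of_card_eq_finrank (by simp [hV])⟩

theorem LinearIndependent.pair_map {W : Type*} [AddCommGroup W] [Module K W] {u v : V}
    (h : LinearIndependent K ![u, v]) (φ : V ≃ₗ[K] W) : LinearIndependent K ![φ u, φ v] := by
  rw [LinearIndependent.pair_iff] at h ⊢
  exact fun s t hst => h s t (φ.injective (by simpa using hst))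

variable [FiniteDimensional K V]

noncomputable def pairEquiv (hV : finrank K V = 2) {u v : V} (h : LinearIndependent K ![u, v]) :
    (K × K) ≃ₗ[K] V :=
  ((LinearMap.fst K K K).smulRight u + (LinearMap.snd K K K).smulRight v).linearEquivOfInjective
    ((injective_iff_map_eq_zero _).mpr fun x hx =>
      Prod.ext_iff.mpr (LinearIndependent.pair_iff.mp h x.1 x.2 (by simpa using hx)))
    (by simp [hV])

@[simp]
theorem pairEquiv_apply (hV : finrank K V = 2) {u v : V} (h : LinearIndependent K ![u, v])
    (x : K × K) : pairEquiv hV h x = x.1 • u + x.2 • v :=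
  rfl

def stdTriple (K : Type*) [Ring K] : Fin 3 → K × K := ![(1, 0), (0, 1), (-1, -1)]

theorem pairEquiv_stdTriple (hV : finrank K V = 2) (hsum : a 0 + a 1 + a 2 = 0)
    (h : LinearIndependent K ![a 0, a 1]) (i : Fin 3) :
    pairEquiv hV h (stdTriple K i) = a i := by
  fin_cases i
  · simp [stdTriple]
  · simp [stdTriple]
  · simp [stdTriple, eq_neg_of_add_eq_zero_right hsum, add_comm]

end TwoDimensional

instance : Fact (Nat.Prime 5) := ⟨by norm_num⟩

instance {K V : Type*} [Field K] [AddCommGroup V] [Module K V] [Fintype K] [DecidableEq V]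
    (f : Fin 2 → V) : Decidable (LinearIndependent K f) :=
  decidable_of_iff _ linearIndependent_fin2.symm

theorem closure_range_eq_top_iff_linearIndependent {p : ℕ} [Fact p.Prime]
    {a : Fin 3 → ZMod p × ZMod p} (hsum : a 0 + a 1 + a 2 = 0) :
    AddSubgroup.closure (Set.range a) = ⊤ ↔ LinearIndependent (ZMod p) ![a 0, a 1] := by
  rw [← span_zmod_eq_addSubgroupClosure (n := p), toAddSubgroup_eq_top,
    span_range_eq_top_iff_linearIndependent (by simp) hsum]

theorem beauvilleDatum_iff {p : (Fin 3 → ZMod 5 × ZMod 5) × (Fin 3 → ZMod 5 × ZMod 5)} :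
    BeauvilleDatum p ↔
      p.1 0 + p.1 1 + p.1 2 = 0 ∧ p.2 0 + p.2 1 + p.2 2 = 0 ∧
      LinearIndependent (ZMod 5) ![p.1 0, p.1 1] ∧ LinearIndependent (ZMod 5) ![p.2 0, p.2 1] ∧
      ∀ i j, LinearIndependent (ZMod 5) ![p.1 i, p.2 j] := by
  constructor
  · rintro ⟨hspan₁, hspan₂, hsum₁, hsum₂, hdisj⟩
    have hli₁ := (closure_range_eq_top_iff_linearIndependent hsum₁).mp hspan₁
    have hli₂ := (closure_range_eq_top_iff_linearIndependent hsum₂).mp hspan₂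
    exact ⟨hsum₁, hsum₂, hli₁, hli₂, (forall_zmultiples_eq_zero_iff_linearIndependent
      (ne_zero_of_linearIndependent_of_sum_eq_zero hsum₁ hli₁)
      (ne_zero_of_linearIndependent_of_sum_eq_zero hsum₂ hli₂)).mp hdisj⟩
  · rintro ⟨hsum₁, hsum₂, hli₁, hli₂, hli⟩
    exact ⟨(closure_range_eq_top_iff_linearIndependent hsum₁).mpr hli₁,
      (closure_range_eq_top_iff_linearIndependent hsum₂).mpr hli₂, hsum₁, hsum₂,
      (forall_zmultiples_eq_zero_iff_linearIndependent
        (ne_zero_of_linearIndependent_of_sum_eq_zero hsum₁ hli₁)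
        (ne_zero_of_linearIndependent_of_sum_eq_zero hsum₂ hli₂)).mpr hli⟩

instance : DecidablePred BeauvilleDatum := fun _ => decidable_of_iff _ beauvilleDatum_iff.symm

theorem BeauvilleDatum.map_linearEquiv (φ : (ZMod 5 × ZMod 5) ≃ₗ[ZMod 5] (ZMod 5 × ZMod 5))
    {p : (Fin 3 → ZMod 5 × ZMod 5) × (Fin 3 → ZMod 5 × ZMod 5)} (hp : BeauvilleDatum p) :
    BeauvilleDatum (φ ∘ p.1, φ ∘ p.2) := by
  obtain ⟨hsum₁, hsum₂, hli₁, hli₂, hli⟩ := beauvilleDatum_iff.mp hp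
  refine beauvilleDatum_iff.mpr ⟨?_, ?_, hli₁.pair_map φ, hli₂.pair_map φ,
    fun i j => (hli i j).pair_map φ⟩ <;>
  simp only [Function.comp_apply, ← map_add, hsum₁, hsum₂, map_zero]

theorem BeauvilleEquiv.trans {p q r : (Fin 3 → ZMod 5 × ZMod 5) × (Fin 3 → ZMod 5 × ZMod 5)}
    (hpq : BeauvilleEquiv p q) (hqr : BeauvilleEquiv q r) : BeauvilleEquiv p r := by
  obtain ⟨φ, σ, τ, hφ₁, hφ₂⟩ := hpq
  obtain ⟨ψ, σ', τ', hψ₁, hψ₂⟩ := hqr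
  exact ⟨φ.trans ψ, σ'.trans σ, τ'.trans τ, fun i => by simp [hφ₁, hψ₁],
    fun i => by simp [hφ₂, hψ₂]⟩

theorem exists_beauvilleEquiv_stdTriple {x : (Fin 3 → ZMod 5 × ZMod 5) × (Fin 3 → ZMod 5 × ZMod 5)}
    (hx : BeauvilleDatum x) :
    ∃ b, BeauvilleDatum (stdTriple (ZMod 5), b) ∧ BeauvilleEquiv x (stdTriple (ZMod 5), b) := by
  obtain ⟨hsum, -, hli, -⟩ := beauvilleDatum_iff.mp hx
  set e := pairEquiv (by simp) hli
  have he : e.symm ∘ x.1 = stdTriple (ZMod 5) :=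
    funext fun i => e.symm_apply_eq.mpr (pairEquiv_stdTriple _ hsum hli i).symm
  exact ⟨e.symm ∘ x.2, he ▸ hx.map_linearEquiv e.symm, e.symm, 1, 1, congrFun he, fun _ => rfl⟩

theorem stdTriple_perm_sum_eq_zero (σ : Equiv.Perm (Fin 3)) :
    stdTriple (ZMod 5) (σ 0) + stdTriple (ZMod 5) (σ 1) + stdTriple (ZMod 5) (σ 2) = 0 := by
  revert σ
  decide

theorem linearIndependent_stdTriple_perm (σ : Equiv.Perm (Fin 3)) :
    LinearIndependent (ZMod 5) ![stdTriple (ZMod 5) (σ 0), stdTriple (ZMod 5) (σ 1)] := by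
  revert σ
  decide

noncomputable def stdTriplePerm (σ : Equiv.Perm (Fin 3)) :
    (ZMod 5 × ZMod 5) ≃ₗ[ZMod 5] (ZMod 5 × ZMod 5) :=
  pairEquiv (by simp) (linearIndependent_stdTriple_perm σ)

theorem stdTriplePerm_stdTriple (σ : Equiv.Perm (Fin 3)) (i : Fin 3) :
    stdTriplePerm σ (stdTriple (ZMod 5) i) = stdTriple (ZMod 5) (σ i) :=
  pairEquiv_stdTriple (a := stdTriple (ZMod 5) ∘ σ) _ (stdTriple_perm_sum_eq_zero σ) _ i

theorem beauvilleEquiv_stdTriple_iff {b b' : Fin 3 → ZMod 5 × ZMod 5} :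
    BeauvilleEquiv (stdTriple (ZMod 5), b) (stdTriple (ZMod 5), b') ↔
      ∃ σ τ : Equiv.Perm (Fin 3), ∀ i, stdTriplePerm σ (b (τ i)) = b' i := by
  constructor
  · rintro ⟨φ, σ, τ, hstd, hb⟩
    have hφ : ∀ i, φ (stdTriple (ZMod 5) i) = stdTriplePerm σ⁻¹ (stdTriple (ZMod 5) i) :=
      fun i => by simpa [stdTriplePerm_stdTriple] using hstd (σ⁻¹ i)
    -- `stdTriple 0` and `stdTriple 1` are the standard basis vectors
    have hφ_eq : φ = stdTriplePerm σ⁻¹ := LinearEquiv.toLinearMap_injective <|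
      LinearMap.prod_ext (LinearMap.ext_ring (hφ 0)) (LinearMap.ext_ring (hφ 1))
    exact ⟨σ⁻¹, τ, hφ_eq ▸ hb⟩
  · rintro ⟨σ, τ, h⟩
    exact ⟨stdTriplePerm σ, σ⁻¹, τ, fun i => by simp [stdTriplePerm_stdTriple], h⟩

def beauvilleRep₁ : (Fin 3 → ZMod 5 × ZMod 5) × (Fin 3 → ZMod 5 × ZMod 5) :=
  (stdTriple (ZMod 5), ![(1, 2), (3, 4), (1, 4)])

def beauvilleRep₂ : (Fin 3 → ZMod 5 × ZMod 5) × (Fin 3 → ZMod 5 × ZMod 5) :=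
  (stdTriple (ZMod 5), ![(2, 4), (1, 3), (2, 3)])

theorem beauvilleDatum_rep₁ : BeauvilleDatum beauvilleRep₁ := by decide

theorem beauvilleDatum_rep₂ : BeauvilleDatum beauvilleRep₂ := by decide

theorem not_beauvilleEquiv_rep₁_rep₂ : ¬ BeauvilleEquiv beauvilleRep₁ beauvilleRep₂ := by
  simp only [beauvilleRep₁, beauvilleRep₂, beauvilleEquiv_stdTriple_iff, stdTriplePerm,
    pairEquiv_apply]
  decide

theorem beauvilleEquiv_rep_of_stdTriple {b : Fin 3 → ZMod 5 × ZMod 5}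
    (hb : BeauvilleDatum (stdTriple (ZMod 5), b)) :
    BeauvilleEquiv (stdTriple (ZMod 5), b) beauvilleRep₁ ∨
      BeauvilleEquiv (stdTriple (ZMod 5), b) beauvilleRep₂ := by
  obtain ⟨-, hsum, -⟩ := beauvilleDatum_iff.mp hb
  have hb₂ : b 2 = -(b 0 + b 1) := eq_neg_of_add_eq_zero_right hsum
  have hb' : b = ![b 0, b 1, -(b 0 + b 1)] := by
    ext i : 1
    fin_cases i <;> simp [hb₂]
  rw [hb'] at hb ⊢
  generalize b 0 = b₀, b 1 = b₁ at hb ⊢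
  revert b₀ b₁
  simp only [beauvilleRep₁, beauvilleRep₂, beauvilleEquiv_stdTriple_iff, stdTriplePerm,
    pairEquiv_apply]
  decide +kernel

/-- The Beauville data for `G = (ℤ/5)²` form exactly two orbits under the
action of `GL(2, ℤ/5) × S₃ × S₃`. -/
theorem stmt_17 :
    ∃ p q : (Fin 3 → ZMod 5 × ZMod 5) × (Fin 3 → ZMod 5 × ZMod 5),
      BeauvilleDatum p ∧ BeauvilleDatum q ∧ ¬ BeauvilleEquiv p q ∧
      ∀ x, BeauvilleDatum x → BeauvilleEquiv x p ∨ BeauvilleEquiv x q := by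
  refine ⟨beauvilleRep₁, beauvilleRep₂, beauvilleDatum_rep₁, beauvilleDatum_rep₂,
    not_beauvilleEquiv_rep₁_rep₂, fun x hx => ?_⟩
  obtain ⟨b, hb, hxb⟩ := exists_beauvilleEquiv_stdTriple hx
  exact (beauvilleEquiv_rep_of_stdTriple hb).imp hxb.trans hxb.trans
end

section
/- The elements a_1 = (123), a_2 = (345), a_3 = (432), a_4 = (215) of the alternating group A_5 satisfy a_1·a_2·a_3·a_4 = 1 and generate A_5. -/
/-!
Each `aᵢ` is a 3-cycle, hence even, so the subgroup `H` they generate lies in `A₅`. It contains `a₁` of order 3, the 5-cycle `a₁ a₂` and the double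
transposition `a₁² a₃`, so `30 ∣ |H|` by Lagrange and `H` has index at most 2 in `A₅`. A subgroup of
index 2 is normal, so simplicity of `A₅` forces `H = A₅`.
-/

open Equiv

theorem IsSimpleGroup.eq_top_of_card_dvd_two_mul {G : Type*} [Group G] [Finite G] [IsSimpleGroup G]
    {H : Subgroup G} (hH : H ≠ ⊥) (hcard : Nat.card G ∣ 2 * Nat.card H) : H = ⊤ := by
  have hindex : H.index ∣ 2 := by
    rw [← H.card_mul_index, mul_comm 2] at hcard
    exact Nat.dvd_of_mul_dvd_mul_left Nat.card_pos hcard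
  rcases (Nat.dvd_prime Nat.prime_two).mp hindex with h | h
  · exact Subgroup.index_eq_one.mp h
  · exact (IsSimpleGroup.eq_bot_or_eq_top_of_normal H (Subgroup.normal_of_index_eq_two h)).resolve_left
      hH

theorem Equiv.Perm.eq_alternatingGroup_five_of_orderOf {H : Subgroup (Perm (Fin 5))}
    (hH : H ≤ alternatingGroup (Fin 5)) {x y z : Perm (Fin 5)} (hx : x ∈ H) (hy : y ∈ H)
    (hz : z ∈ H) (hx2 : orderOf x = 2) (hy3 : orderOf y = 3) (hz5 : orderOf z = 5) :
    H = alternatingGroup (Fin 5) := by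
  set K := H.subgroupOf (alternatingGroup (Fin 5))
  have hdvd : ∀ {g : Perm (Fin 5)}, g ∈ H → orderOf g ∣ Nat.card K := fun {g} hg => by
    simpa only [Subgroup.orderOf_mk] using
      K.orderOf_dvd_natCard (x := ⟨g, hH hg⟩) (Subgroup.mem_subgroupOf.mpr hg)
  have h30 : 30 ∣ Nat.card K :=
    Nat.Coprime.mul_dvd_of_dvd_of_dvd (by norm_num)
      (Nat.Coprime.mul_dvd_of_dvd_of_dvd (by norm_num) (hx2 ▸ hdvd hx) (hy3 ▸ hdvd hy))
      (hz5 ▸ hdvd hz)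
  have hK : K = ⊤ := by
    refine IsSimpleGroup.eq_top_of_card_dvd_two_mul ?_ ?_
    · rintro hbot
      rw [hbot, Subgroup.card_bot] at h30
      norm_num at h30
    · rw [nat_card_alternatingGroup, Nat.card_fin]
      simpa [Nat.factorial] using Nat.mul_dvd_mul_left 2 h30
  exact le_antisymm hH (Subgroup.subgroupOf_eq_top.mp hK)

/-- The 3-cycles `(123), (345), (432), (215)` (on `{1,…,5}`, here written on
`Fin 5`) lie in the alternating group `A₅`, have product `1`, and generate
`A₅`. -/
theorem stmt_18 :
    let a₁ : Perm (Fin 5) := c[0, 1, 2]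
    let a₂ : Perm (Fin 5) := c[2, 3, 4]
    let a₃ : Perm (Fin 5) := c[3, 2, 1]
    let a₄ : Perm (Fin 5) := c[1, 0, 4]
    a₁ * a₂ * a₃ * a₄ = 1 ∧
    (∀ x ∈ ({a₁, a₂, a₃, a₄} : Set (Perm (Fin 5))), x ∈ alternatingGroup (Fin 5)) ∧
    Subgroup.closure ({a₁, a₂, a₃, a₄} : Set (Perm (Fin 5)))
      = alternatingGroup (Fin 5) := by
  intro a₁ a₂ a₃ a₄
  have heven : ∀ x ∈ ({a₁, a₂, a₃, a₄} : Set (Perm (Fin 5))), x ∈ alternatingGroup (Fin 5) := by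
    rintro x (rfl | rfl | rfl | rfl) <;> rw [Perm.mem_alternatingGroup] <;> decide
  set H := Subgroup.closure ({a₁, a₂, a₃, a₄} : Set (Perm (Fin 5)))
  have h₁ : a₁ ∈ H := Subgroup.subset_closure (by simp)
  have h₂ : a₂ ∈ H := Subgroup.subset_closure (by simp)
  have h₃ : a₃ ∈ H := Subgroup.subset_closure (by simp)
  refine ⟨by decide, heven, ?_⟩
  refine Perm.eq_alternatingGroup_five_of_orderOf ((Subgroup.closure_le _).mpr heven)
    (x := a₁ * a₁ * a₃) (y := a₁) (z := a₁ * a₂)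
    (mul_mem (mul_mem h₁ h₁) h₃) h₁ (mul_mem h₁ h₂) ?_ ?_ ?_
  · exact orderOf_eq_prime (by decide) (by decide)
  · exact orderOf_eq_prime (by decide) (by decide)
  · set_option maxRecDepth 4000 in
    exact orderOf_eq_prime (hp := ⟨by norm_num⟩) (by decide) (by decide)
end
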